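/- arXiv:math/0312526 — 2 statements merged into one kernel-verified Lean document; each statement's English description precedes it below -/
import Mathlib

section
/- Uniform integrability of the Cesàro kernel majorants: let λ > 0 and δ > λ. If λ < δ ≤ λ+1, then sup_{n≥1} n^{λ-δ} ∫_0^π (n^{-2} + θ²)^{-(λ+δ+1)/2} (sin θ)^{2λ} dθ < ∞; and if δ ≥ λ+1, then sup_{n≥1} n^{-1} ∫_0^π (n^{-2} + θ²)^{-λ-1} (sin θ)^{2λ} dθ < ∞. -/
open MeasureTheory Real Set

lemma statement5_aux (lam d : ℝ) (hlam : 0 < lam) (hd : lam < d) (n : ℕ) (hn : 1 ≤ n) :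
    (n : ℝ) ^ (lam - d) *
        ∫ θ in (0:ℝ)..π,
          (((n : ℝ))⁻¹ ^ 2 + θ ^ 2) ^ (-(lam + d + 1) / 2) *
            Real.sin θ ^ (2 * lam) ≤ 1 / (2 * lam + 1) + 1 / (d - lam) := by
  set N : ℝ := (n : ℝ) with hNdef
  have hN1 : (1:ℝ) ≤ N := by rw [hNdef]; exact_mod_cast hn
  have hNpos : 0 < N := lt_of_lt_of_le one_pos hN1
  have hNinv : 0 < N⁻¹ := inv_pos.mpr hNpos
  have hNinvle : N⁻¹ ≤ π := le_trans (inv_le_one_of_one_le₀ hN1) (by linarith [Real.pi_gt_three])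
  set e : ℝ := -(lam + d + 1) / 2 with he
  have heneg : e < 0 := by
    rw [he]; apply div_neg_of_neg_of_pos _ two_pos; linarith
  set f : ℝ → ℝ := fun θ => (N⁻¹ ^ 2 + θ ^ 2) ^ e * Real.sin θ ^ (2 * lam) with hf
  have hbase : ∀ θ : ℝ, 0 < N⁻¹ ^ 2 + θ ^ 2 := fun θ => by positivity
  have hf_cont : Continuous f := by
    apply Continuous.mul
    · exact (continuous_const.add (continuous_pow 2)).rpow_const
        (fun x => Or.inl (ne_of_gt (hbase x)))
    · exact Real.continuous_sin.rpow_const (fun x => Or.inr (by positivity))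
  have hInt : ∀ a b : ℝ, IntervalIntegrable f volume a b :=
    fun a b => hf_cont.intervalIntegrable a b
  have hsplit : ∫ θ in (0:ℝ)..π, f θ = (∫ θ in (0:ℝ)..N⁻¹, f θ) + ∫ θ in N⁻¹..π, f θ :=
    (intervalIntegral.integral_add_adjacent_intervals (hInt _ _) (hInt _ _)).symm
  -- sin θ ^ (2 lam) ≤ θ ^ (2 lam) on [0, π]
  have hsinb : ∀ θ : ℝ, 0 ≤ θ → Real.sin θ ^ (2 * lam) ≤ θ ^ (2 * lam) := by
    intro θ hθ
    rcases le_or_gt θ π with hθπ | hθπ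
    · exact Real.rpow_le_rpow (Real.sin_nonneg_of_nonneg_of_le_pi hθ hθπ)
        (Real.sin_le hθ) (by positivity)
    · calc Real.sin θ ^ (2 * lam) ≤ |Real.sin θ ^ (2 * lam)| := le_abs_self _
        _ ≤ |Real.sin θ| ^ (2 * lam) := Real.abs_rpow_le_abs_rpow _ _
        _ ≤ 1 ^ (2 * lam) := Real.rpow_le_rpow (abs_nonneg _)
              (abs_le.mpr ⟨Real.neg_one_le_sin θ, Real.sin_le_one θ⟩) (by positivity)
        _ ≤ θ ^ (2 * lam) :=
            Real.rpow_le_rpow (by norm_num) (by linarith [Real.pi_gt_three]) (by positivity)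
  -- first piece
  have hb1 : ∫ θ in (0:ℝ)..N⁻¹, f θ ≤ N ^ (d - lam) * (1 / (2 * lam + 1)) := by
    have hg_cont : Continuous fun θ : ℝ => (N⁻¹ ^ 2) ^ e * θ ^ (2 * lam) :=
      continuous_const.mul (continuous_id.rpow_const (fun x => Or.inr (by positivity)))
    have hmono : ∫ θ in (0:ℝ)..N⁻¹, f θ ≤
        ∫ θ in (0:ℝ)..N⁻¹, (N⁻¹ ^ 2) ^ e * θ ^ (2 * lam) := by
      apply intervalIntegral.integral_mono_on hNinv.le (hInt 0 N⁻¹)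
        (hg_cont.intervalIntegrable 0 N⁻¹)
      intro θ hθ
      have hθ0 : 0 ≤ θ := hθ.1
      have hsn : 0 ≤ Real.sin θ ^ (2 * lam) :=
        Real.rpow_nonneg (Real.sin_nonneg_of_nonneg_of_le_pi hθ0 (hθ.2.trans hNinvle)) _
      apply mul_le_mul _ (hsinb θ hθ0) hsn (by positivity)
      exact Real.rpow_le_rpow_of_nonpos (by positivity) (by nlinarith [sq_nonneg θ]) heneg.le
    have hval : ∫ θ in (0:ℝ)..N⁻¹, (N⁻¹ ^ 2) ^ e * θ ^ (2 * lam)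
        = (N⁻¹ ^ 2) ^ e * ((N⁻¹ ^ (2 * lam + 1) - 0 ^ (2 * lam + 1)) / (2 * lam + 1)) := by
      rw [intervalIntegral.integral_const_mul, integral_rpow (Or.inl (by linarith))]
    refine (hmono.trans_eq hval).trans ?_
    rw [Real.zero_rpow (by positivity)]
    -- simplify powers of N
    have h1 : (N⁻¹ ^ 2 : ℝ) ^ e = N⁻¹ ^ (2 * e) := by
      rw [← Real.rpow_natCast N⁻¹ 2, ← Real.rpow_mul hNinv.le]
      norm_num
    have h2 : (N⁻¹ : ℝ) ^ (2 * e) * N⁻¹ ^ (2 * lam + 1) = N ^ (d - lam) := by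
      rw [← Real.rpow_add hNinv, Real.inv_rpow hNpos.le, ← Real.rpow_neg hNpos.le]
      congr 1
      rw [he]; ring
    have hEq : (N⁻¹ ^ 2) ^ e * ((N⁻¹ ^ (2 * lam + 1) - 0) / (2 * lam + 1))
        = N ^ (d - lam) * (1 / (2 * lam + 1)) := by
      rw [h1, ← h2]; ring
    exact le_of_eq hEq

  -- second piece
  have hb2 : ∫ θ in N⁻¹..π, f θ ≤ N ^ (d - lam) * (1 / (d - lam)) := by
    have hg_cont : ContinuousOn (fun θ : ℝ => θ ^ (lam - d - 1)) (Set.uIcc N⁻¹ π) := by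
      apply ContinuousOn.rpow_const continuousOn_id
      intro x hx
      left
      have := (Set.mem_uIcc.mp hx)
      rcases this with h | h
      · exact ne_of_gt (lt_of_lt_of_le hNinv h.1)
      · exact ne_of_gt (lt_of_lt_of_le Real.pi_pos h.1)
    have hmono : ∫ θ in N⁻¹..π, f θ ≤ ∫ θ in N⁻¹..π, θ ^ (lam - d - 1) := by
      apply intervalIntegral.integral_mono_on hNinvle (hInt N⁻¹ π)
        (hg_cont.intervalIntegrable)
      intro θ hθ
      have hθpos : 0 < θ := lt_of_lt_of_le hNinv hθ.1
      have hsn : 0 ≤ Real.sin θ ^ (2 * lam) :=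
        Real.rpow_nonneg (Real.sin_nonneg_of_nonneg_of_le_pi hθpos.le hθ.2) _
      have step1 : f θ ≤ (θ ^ 2 : ℝ) ^ e * θ ^ (2 * lam) := by
        apply mul_le_mul _ (hsinb θ hθpos.le) hsn (by positivity)
        exact Real.rpow_le_rpow_of_nonpos (by positivity) (by nlinarith [sq_nonneg N⁻¹]) heneg.le
      have step2 : (θ ^ 2 : ℝ) ^ e * θ ^ (2 * lam) = θ ^ (lam - d - 1) := by
        rw [← Real.rpow_natCast θ 2, ← Real.rpow_mul hθpos.le, ← Real.rpow_add hθpos]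
        congr 1
        rw [he]; push_cast; ring
      exact step1.trans_eq step2
    have hval : ∫ θ in N⁻¹..π, θ ^ (lam - d - 1)
        = (π ^ (lam - d - 1 + 1) - N⁻¹ ^ (lam - d - 1 + 1)) / (lam - d - 1 + 1) := by
      apply integral_rpow
      right
      constructor
      · intro h; linarith [h]
      · exact Set.notMem_uIcc_of_lt hNinv Real.pi_pos
    refine (hmono.trans_eq hval).trans ?_
    have hNe : N⁻¹ ^ (lam - d - 1 + 1) = N ^ (d - lam) := by
      rw [Real.inv_rpow hNpos.le, ← Real.rpow_neg hNpos.le]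
      congr 1; ring
    rw [hNe]
    have hπpos : (0:ℝ) < π ^ (lam - d - 1 + 1) := Real.rpow_pos_of_pos Real.pi_pos _
    have hdl : lam - d - 1 + 1 < 0 := by linarith
    rw [div_le_iff_of_neg (by linarith : lam - d - 1 + 1 < 0)]
    have hNd : 0 < N ^ (d - lam) := Real.rpow_pos_of_pos hNpos _
    have hdne : d - lam ≠ 0 := ne_of_gt (by linarith)
    have : N ^ (d - lam) * (1 / (d - lam)) * (lam - d - 1 + 1) = -N ^ (d - lam) := by
      have h0 : lam - d - 1 + 1 = -(d - lam) := by ring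
      rw [h0]
      field_simp
    rw [this]
    nlinarith
  -- combine
  have hsum : ∫ θ in (0:ℝ)..π, f θ ≤ N ^ (d - lam) * (1 / (2 * lam + 1) + 1 / (d - lam)) := by
    rw [hsplit, mul_add]
    exact add_le_add hb1 hb2
  have hNld : 0 < N ^ (lam - d) := Real.rpow_pos_of_pos hNpos _
  calc N ^ (lam - d) * ∫ θ in (0:ℝ)..π, f θ
      ≤ N ^ (lam - d) * (N ^ (d - lam) * (1 / (2 * lam + 1) + 1 / (d - lam))) :=
        mul_le_mul_of_nonneg_left hsum hNld.le
    _ = 1 / (2 * lam + 1) + 1 / (d - lam) := by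
        rw [← mul_assoc, ← Real.rpow_add hNpos]
        norm_num

theorem statement5 (lam del : ℝ) (hlam : 0 < lam) (hdel : lam < del) :
    (del ≤ lam + 1 →
      ∃ C : ℝ, ∀ n : ℕ, 1 ≤ n →
        (n : ℝ) ^ (lam - del) *
            ∫ θ in (0:ℝ)..π,
              (((n : ℝ))⁻¹ ^ 2 + θ ^ 2) ^ (-(lam + del + 1) / 2) *
                Real.sin θ ^ (2 * lam) ≤ C) ∧
    (lam + 1 ≤ del →
      ∃ C : ℝ, ∀ n : ℕ, 1 ≤ n →
        (n : ℝ)⁻¹ *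
            ∫ θ in (0:ℝ)..π,
              (((n : ℝ))⁻¹ ^ 2 + θ ^ 2) ^ (-lam - 1) *
                Real.sin θ ^ (2 * lam) ≤ C) := by
  constructor
  · intro _
    exact ⟨1 / (2 * lam + 1) + 1 / (del - lam),
      fun n hn => statement5_aux lam del hlam hdel n hn⟩
  · intro _
    refine ⟨1 / (2 * lam + 1) + 1 / (lam + 1 - lam), fun n hn => ?_⟩
    have h := statement5_aux lam (lam + 1) hlam (lt_add_one lam) n hn
    have he : -(lam + (lam + 1) + 1) / 2 = -lam - 1 := by ring
    have hp : lam - (lam + 1) = (-1 : ℝ) := by ring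
    rw [he, hp] at h
    rwa [Real.rpow_neg_one] at h
end

section
/- Support property of the intertwined cap indicator (G = Z_2^{d+1}): for x, y ∈ S^d and 0 < θ ≤ π, if ⟨x̄, ȳ⟩ < cos θ, where x̄ = (|x_1|,…,|x_{d+1}|) and ȳ = (|y_1|,…,|y_{d+1}|), then V_κ[χ_{c(x,θ)}](y) = 0. -/
open MeasureTheory Real Filter Set

noncomputable section

/-- The unit sphere `S^d` in `ℝ^{d+1}`. -/
abbrev Sph (d : ℕ) := Metric.sphere (0 : EuclideanSpace ℝ (Fin (d+1))) 1

/-- The surface (Lebesgue) measure `dω` on `S^d`. -/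
def sphMeasure (d : ℕ) : Measure (Sph d) :=
  (volume : Measure (EuclideanSpace ℝ (Fin (d+1)))).toSphere

/-- The weight function `h_κ(x) = ∏_i |x_i|^{κ_i}`. -/
def hkw {d : ℕ} (κ : Fin (d+1) → ℝ) (x : EuclideanSpace ℝ (Fin (d+1))) : ℝ :=
  ∏ i, |x i| ^ κ i

/-- The normalization constant `a_κ`, with `a_κ⁻¹ = ∫_{S^d} h_κ² dω`. -/
def aK {d : ℕ} (κ : Fin (d+1) → ℝ) : ℝ :=
  (∫ y : Sph d, hkw κ (y : EuclideanSpace ℝ (Fin (d+1))) ^ 2 ∂sphMeasure d)⁻¹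

/-- The norm `‖f‖_{κ,1} = a_κ ∫_{S^d} |f| h_κ² dω`. -/
def normK1 {d : ℕ} (κ : Fin (d+1) → ℝ) (f : Sph d → ℝ) : ℝ :=
  aK κ * ∫ y : Sph d, |f y| * hkw κ (y : EuclideanSpace ℝ (Fin (d+1))) ^ 2 ∂sphMeasure d

/-- `f ∈ L¹(h_κ² dω)`. -/
def MemL1K {d : ℕ} (κ : Fin (d+1) → ℝ) (f : Sph d → ℝ) : Prop :=
  Integrable (fun y : Sph d => f y * hkw κ (y : EuclideanSpace ℝ (Fin (d+1))) ^ 2)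
    (sphMeasure d)

/-- The intertwining operator `V_κ` for the group `Z_2^{d+1}`:
`V_κ g(x) = c_κ ∫_{[-1,1]^{d+1}} g(x₁t₁,…,x_{d+1}t_{d+1}) ∏ (1+tᵢ)(1-tᵢ²)^{κᵢ-1} dt`. -/
def Vk {d : ℕ} (κ : Fin (d+1) → ℝ) (g : EuclideanSpace ℝ (Fin (d+1)) → ℝ)
    (x : EuclideanSpace ℝ (Fin (d+1))) : ℝ :=
  (∫ t in Set.univ.pi fun _ : Fin (d+1) => Icc (-1:ℝ) 1,
      ∏ i, (1 + t i) * (1 - t i ^ 2) ^ (κ i - 1))⁻¹ *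
  ∫ t in Set.univ.pi fun _ : Fin (d+1) => Icc (-1:ℝ) 1,
      g (WithLp.toLp 2 (fun i => x i * t i)) * ∏ i, (1 + t i) * (1 - t i ^ 2) ^ (κ i - 1)

/-- The solid cap `c(x,θ) = {y : ‖y‖ ≤ 1, ⟨x,y⟩ ≥ cos θ}`. -/
def capSet {d : ℕ} (x : EuclideanSpace ℝ (Fin (d+1))) (θ : ℝ) :
    Set (EuclideanSpace ℝ (Fin (d+1))) :=
  {y | ‖y‖ ≤ 1 ∧ Real.cos θ ≤ inner ℝ x y}

/-- `∫_{S^d} f(y) V_κ[χ_{c(x,θ)}](y) h_κ²(y) dω(y)`. -/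
def capInt {d : ℕ} (κ : Fin (d+1) → ℝ) (f : Sph d → ℝ)
    (x : EuclideanSpace ℝ (Fin (d+1))) (θ : ℝ) : ℝ :=
  ∫ y : Sph d, f y * Vk κ ((capSet x θ).indicator fun _ => (1:ℝ))
      (y : EuclideanSpace ℝ (Fin (d+1)))
    * hkw κ (y : EuclideanSpace ℝ (Fin (d+1))) ^ 2 ∂sphMeasure d

/-- The maximal function `M_κ f`. -/
def maxK {d : ℕ} (κ : Fin (d+1) → ℝ) (f : Sph d → ℝ) (x : Sph d) : ℝ :=
  ⨆ θ ∈ Ioc (0:ℝ) π,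
    capInt κ (fun y => |f y|) (x : EuclideanSpace ℝ (Fin (d+1))) θ /
      capInt κ (fun _ => (1:ℝ)) (x : EuclideanSpace ℝ (Fin (d+1))) θ

theorem inner_toLp_mul_le_sum_abs_mul {ι : Type*} [Fintype ι] (x y : EuclideanSpace ℝ ι)
    {t : ι → ℝ} (ht : ∀ i, |t i| ≤ 1) :
    inner ℝ x (WithLp.toLp 2 fun i => y i * t i) ≤ ∑ i, |x i| * |y i| := by
  rw [PiLp.inner_apply]
  refine Finset.sum_le_sum fun i _ => ?_
  calc inner ℝ (x i) (y i * t i) ≤ |x i * (y i * t i)| := by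
        rw [Real.inner_apply]; exact le_abs_self _
    _ = |x i| * (|y i| * |t i|) := by rw [abs_mul, abs_mul]
    _ ≤ |x i| * (|y i| * 1) := by gcongr; exact ht i
    _ = |x i| * |y i| := by rw [mul_one]

theorem Vk_eq_zero_of_forall_mem_cube {d : ℕ} (κ : Fin (d+1) → ℝ)
    {g : EuclideanSpace ℝ (Fin (d+1)) → ℝ} {y : EuclideanSpace ℝ (Fin (d+1))}
    (hg : ∀ t : Fin (d+1) → ℝ, (∀ i, |t i| ≤ 1) → g (WithLp.toLp 2 fun i => y i * t i) = 0) :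
    Vk κ g y = 0 := by
  refine mul_eq_zero_of_right _ (setIntegral_eq_zero_of_forall_eq_zero fun t ht => ?_)
  have ht' : ∀ i, |t i| ≤ 1 := fun i => abs_le.mpr (ht i (mem_univ i))
  rw [hg t ht', zero_mul]

theorem statement8_general (d : ℕ) (κ : Fin (d+1) → ℝ)
    (x y : Sph d) (θ : ℝ)
    (h : ∑ i, |(x : EuclideanSpace ℝ (Fin (d+1))) i| *
          |(y : EuclideanSpace ℝ (Fin (d+1))) i| < Real.cos θ) :
    Vk κ ((capSet (x : EuclideanSpace ℝ (Fin (d+1))) θ).indicator fun _ => (1:ℝ))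
        (y : EuclideanSpace ℝ (Fin (d+1))) = 0 := by
  refine Vk_eq_zero_of_forall_mem_cube κ fun t ht => indicator_of_notMem ?_ _
  rintro ⟨-, hcap⟩
  exact (hcap.trans (inner_toLp_mul_le_sum_abs_mul _ _ ht)).not_gt h

theorem statement8 (d : ℕ) (hd : 1 ≤ d) (κ : Fin (d+1) → ℝ) (hκ : ∀ i, 0 < κ i)
    (x y : Sph d) (θ : ℝ) (hθ : θ ∈ Ioc (0:ℝ) π)
    (h : ∑ i, |(x : EuclideanSpace ℝ (Fin (d+1))) i| *
          |(y : EuclideanSpace ℝ (Fin (d+1))) i| < Real.cos θ) :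
    Vk κ ((capSet (x : EuclideanSpace ℝ (Fin (d+1))) θ).indicator fun _ => (1:ℝ))
        (y : EuclideanSpace ℝ (Fin (d+1))) = 0 :=
  statement8_general d κ x y θ h
end
end
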